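/- arXiv:2404.04865 — 2 statements merged into one kernel-verified Lean document; each statement's English description precedes it below -/
import Mathlib

section
/- Given a hypothesis space H and a domain D_XY, OOD detection is learnable under risk in the single-distribution space 𝒟^{D_XY} := {D^α : α ∈ [0,1)} for H if and only if the linear condition under risk holds for D_XY, i.e., for every α ∈ [0,1): inf_{h∈H} R_D^α(h) = (1−α)·inf_{h∈H} R_D^in(h) + α·inf_{h∈H} R_D^out(h). -/
open MeasureTheory Filter Set
open scoped ENNReal NNReal

noncomputable section

namespace OODF

/-- A *domain*: a mixture `(1-π)·D_I + π·D_O` of an ID joint distribution `D_I` on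
`𝒳 × {1,…,K}` and an OOD joint distribution `D_O` on `𝒳 × {K+1}`, with class prior
`π ∈ [0,1)`.  Labels are encoded as naturals: ID labels are `{1,…,K}`, OOD label is `K+1`. -/
structure Domain (𝒳 : Type*) [MeasurableSpace 𝒳] (K : ℕ) where
  DI : Measure (𝒳 × ℕ)
  DO : Measure (𝒳 × ℕ)
  prior : ℝ
  probI : IsProbabilityMeasure DI
  probO : IsProbabilityMeasure DO
  suppI : DI {p | p.2 ∉ Set.Icc 1 K} = 0
  suppO : DO {p | p.2 ≠ K + 1} = 0
  prior_mem : prior ∈ Set.Ico (0 : ℝ) 1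

variable {𝒳 : Type*} [MeasurableSpace 𝒳] {K : ℕ}

namespace Domain

/-- the mixed joint distribution `D_XY = (1-π)·D_I + π·D_O` -/
def joint (D : Domain 𝒳 K) : Measure (𝒳 × ℕ) :=
  ENNReal.ofReal (1 - D.prior) • D.DI + ENNReal.ofReal D.prior • D.DO

/-- the marginal `D_{X_I}` of the ID joint distribution on the feature space -/
def margI (D : Domain 𝒳 K) : Measure 𝒳 := D.DI.map Prod.fst

/-- the marginal `D_{X_O}` of the OOD joint distribution on the feature space -/
def margO (D : Domain 𝒳 K) : Measure 𝒳 := D.DO.map Prod.fst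

/-- the domain `D^α = (1-α)·D_I + α·D_O`, i.e. `D` with its class prior replaced by `α` -/
def withPrior (D : Domain 𝒳 K) (α : Set.Ico (0 : ℝ) 1) : Domain 𝒳 K :=
  { D with prior := α.1, prior_mem := α.2 }

end Domain

/-- a prior-unknown domain space: closed under changing the class prior -/
def PriorUnknown (𝒟 : Set (Domain 𝒳 K)) : Prop :=
  ∀ D ∈ 𝒟, ∀ α : Set.Ico (0 : ℝ) 1, D.withPrior α ∈ 𝒟

/-- the risk `R_D(h)` w.r.t. the mixed joint distribution -/
def risk (ℓ : ℕ → ℕ → ℝ) (D : Domain 𝒳 K) (h : 𝒳 → ℕ) : ℝ :=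
  ∫ p, ℓ (h p.1) p.2 ∂D.joint

/-- the ID risk `R_D^in(h)` -/
def riskIn (ℓ : ℕ → ℕ → ℝ) (D : Domain 𝒳 K) (h : 𝒳 → ℕ) : ℝ :=
  ∫ p, ℓ (h p.1) p.2 ∂D.DI

/-- the OOD risk `R_D^out(h)` -/
def riskOut (ℓ : ℕ → ℕ → ℝ) (D : Domain 𝒳 K) (h : 𝒳 → ℕ) : ℝ :=
  ∫ p, ℓ (h p.1) (K + 1) ∂D.DO

/-- the `α`-risk `R_D^α(h) = (1-α)·R_D^in(h) + α·R_D^out(h)` -/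
def riskA (ℓ : ℕ → ℕ → ℝ) (D : Domain 𝒳 K) (h : 𝒳 → ℕ) (α : ℝ) : ℝ :=
  (1 - α) * riskIn ℓ D h + α * riskOut ℓ D h

/-- the distribution of an i.i.d. sample of size `n` from the ID joint distribution -/
def sampleMeasure (D : Domain 𝒳 K) (n : ℕ) : Measure (Fin n → 𝒳 × ℕ) :=
  letI := D.probI
  Measure.pi fun _ => D.DI

/-- An algorithm maps, for every sample size `n ≥ 1`, a labeled sample to a function on `𝒳`. -/
abbrev Algorithm (𝒳 β : Type*) := (n : ℕ) → (Fin n → 𝒳 × ℕ) → (𝒳 → β)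

/-- `A` is consistent w.r.t. `𝒟` under risk with rate `ε`: it outputs hypotheses in `H`,
the resulting risks are measurable in the sample, and the expected excess risk for samples
of size `n ≥ 1` is at most `ε n`. -/
def ConsistentRisk (ℓ : ℕ → ℕ → ℝ) (𝒟 : Set (Domain 𝒳 K)) (H : Set (𝒳 → ℕ))
    (A : Algorithm 𝒳 ℕ) (ε : ℕ → ℝ) : Prop :=
  (∀ n : ℕ, 1 ≤ n → ∀ S, A n S ∈ H) ∧
  (∀ D ∈ 𝒟, ∀ n : ℕ, 1 ≤ n → Measurable fun S : Fin n → 𝒳 × ℕ => risk ℓ D (A n S)) ∧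
  ∀ D ∈ 𝒟, ∀ n : ℕ, 1 ≤ n →
    ∫ S, (risk ℓ D (A n S) - ⨅ h : H, risk ℓ D h.1) ∂(sampleMeasure D n) ≤ ε n

/-- OOD detection is learnable under risk in `𝒟` for `H` with the given rate. -/
def LearnableRiskRate (ℓ : ℕ → ℕ → ℝ) (𝒟 : Set (Domain 𝒳 K)) (H : Set (𝒳 → ℕ))
    (ε : ℕ → ℝ) : Prop :=
  ∃ A, ConsistentRisk ℓ 𝒟 H A ε

/-- learnability of OOD detection under risk -/
def LearnableRisk (ℓ : ℕ → ℕ → ℝ) (𝒟 : Set (Domain 𝒳 K)) (H : Set (𝒳 → ℕ)) : Prop :=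
  ∃ ε : ℕ → ℝ, Antitone ε ∧ Tendsto ε atTop (nhds 0) ∧ LearnableRiskRate ℓ 𝒟 H ε

/-- `A` is strongly consistent: the expected excess `α`-risks are uniformly small over
all `α ∈ [0,1]`. -/
def StrongConsistentRisk (ℓ : ℕ → ℕ → ℝ) (𝒟 : Set (Domain 𝒳 K)) (H : Set (𝒳 → ℕ))
    (A : Algorithm 𝒳 ℕ) (ε : ℕ → ℝ) : Prop :=
  (∀ n : ℕ, 1 ≤ n → ∀ S, A n S ∈ H) ∧
  (∀ D ∈ 𝒟, ∀ n : ℕ, 1 ≤ n → ∀ α : ℝ,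
    Measurable fun S : Fin n → 𝒳 × ℕ => riskA ℓ D (A n S) α) ∧
  ∀ D ∈ 𝒟, ∀ n : ℕ, 1 ≤ n → ∀ α ∈ Set.Icc (0 : ℝ) 1,
    ∫ S, (riskA ℓ D (A n S) α - ⨅ h : H, riskA ℓ D h.1 α) ∂(sampleMeasure D n) ≤ ε n

/-- strong learnability of OOD detection under risk -/
def StrongLearnableRisk (ℓ : ℕ → ℕ → ℝ) (𝒟 : Set (Domain 𝒳 K)) (H : Set (𝒳 → ℕ)) : Prop :=
  ∃ ε : ℕ → ℝ, Antitone ε ∧ Tendsto ε atTop (nhds 0) ∧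
    ∃ A, StrongConsistentRisk ℓ 𝒟 H A ε

/-- the AUC of a ranking function `r` w.r.t. ID marginal `P` and OOD marginal `Q`:
`AUC(r) = E_{x ~ P} E_{x' ~ Q} [1_{r(x) > r(x')} + (1/2)·1_{r(x) = r(x')}]` -/
def AUC (r : 𝒳 → ℝ) (P Q : Measure 𝒳) : ℝ :=
  ∫ x, (∫ x', ((if r x' < r x then (1 : ℝ) else 0) +
      (1 / 2) * (if r x = r x' then (1 : ℝ) else 0)) ∂Q) ∂P

/-- `A` is AUC-consistent w.r.t. `𝒟` with rate `ε`. -/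
def ConsistentAUC (𝒟 : Set (Domain 𝒳 K)) (R : Set (𝒳 → ℝ))
    (A : Algorithm 𝒳 ℝ) (ε : ℕ → ℝ) : Prop :=
  (∀ n : ℕ, 1 ≤ n → ∀ S, A n S ∈ R) ∧
  (∀ D ∈ 𝒟, ∀ n : ℕ, 1 ≤ n →
    Measurable fun S : Fin n → 𝒳 × ℕ => AUC (A n S) D.margI D.margO) ∧
  ∀ D ∈ 𝒟, ∀ n : ℕ, 1 ≤ n →
    ∫ S, ((⨆ r : R, AUC r.1 D.margI D.margO) - AUC (A n S) D.margI D.margO)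
      ∂(sampleMeasure D n) ≤ ε n

/-- OOD detection is learnable under AUC in `𝒟` for `R` with the given rate. -/
def LearnableAUCRate (𝒟 : Set (Domain 𝒳 K)) (R : Set (𝒳 → ℝ)) (ε : ℕ → ℝ) : Prop :=
  ∃ A, ConsistentAUC 𝒟 R A ε

/-- learnability of OOD detection under AUC -/
def LearnableAUC (𝒟 : Set (Domain 𝒳 K)) (R : Set (𝒳 → ℝ)) : Prop :=
  ∃ ε : ℕ → ℝ, Antitone ε ∧ Tendsto ε atTop (nhds 0) ∧ LearnableAUCRate 𝒟 R ε

/-- the (topological) support of a measure -/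
def mSupport {α : Type*} [TopologicalSpace α] [MeasurableSpace α] (μ : Measure α) : Set α :=
  {x | ∀ U ∈ nhds x, 0 < μ U}

/-- the separate space `𝒟^s`: all domains whose ID and OOD marginals have disjoint supports -/
def separateSpace (𝒳 : Type*) [MeasurableSpace 𝒳] [TopologicalSpace 𝒳] (K : ℕ) :
    Set (Domain 𝒳 K) :=
  {D | mSupport D.margO ∩ mSupport D.margI = ∅}

/-- a class `G` of binary functions (encoded as predicates) shatters the finite set `C` -/
def Shatters {α : Type*} (G : Set (α → Prop)) (C : Finset α) : Prop :=
  ∀ f : α → Prop, ∃ g ∈ G, ∀ x ∈ C, g x ↔ f x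

/-- the VC dimension of a class of binary functions (encoded as predicates) -/
def VCdim {α : Type*} (G : Set (α → Prop)) : ℕ∞ :=
  sSup {n : ℕ∞ | ∃ C : Finset α, Shatters G C ∧ n = (C.card : ℕ∞)}

/-!
The sample distribution `D_Iⁿ` does not depend on the prior, so for an algorithm the expected
in- and out-risks `Iₙ`, `Oₙ` of its output are the same for every `D^β`, and consistency reads
`(1-β) Iₙ + β Oₙ ≤ R^β(h) + ε(n)` for all `h ∈ H` and `β ∈ [0,1)`. Taking `β = 0` and letting
`β → 1` gives `Iₙ ≤ inf R^in + ε(n)` and `Oₙ ≤ inf R^out + ε(n)`, hence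
`inf R^α ≤ (1-α) inf R^in + α inf R^out + ε(n)`; the reverse inequality always holds.
Conversely, the linear condition at `α = 1/2` yields some `hₙ ∈ H` that is `1/(n+1)`-optimal for
`R^in` and `R^out` simultaneously, hence for every `R^α`, and the algorithm returning `hₙ`
regardless of the sample is consistent. All risks are finite because only finitely many labels
occur, so the loss is bounded on them.
-/

section Infima

variable {ι : Type*} [Nonempty ι] {f g : ι → ℝ}

lemma affine_iInf_le_iInf_affine (hf : BddBelow (range f)) (hg : BddBelow (range g))
    {α : ℝ} (hα : α ∈ Icc (0 : ℝ) 1) :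
    (1 - α) * iInf f + α * iInf g ≤ ⨅ i, ((1 - α) * f i + α * g i) :=
  le_ciInf fun i => add_le_add (mul_le_mul_of_nonneg_left (ciInf_le hf i) (sub_nonneg.2 hα.2))
    (mul_le_mul_of_nonneg_left (ciInf_le hg i) hα.1)

lemma exists_lt_iInf_add_of_iInf_affine_eq (hf : BddBelow (range f)) (hg : BddBelow (range g))
    {α : ℝ} (hα : α ∈ Ioo (0 : ℝ) 1)
    (h : ⨅ i, ((1 - α) * f i + α * g i) = (1 - α) * iInf f + α * iInf g)
    {t : ℝ} (ht : 0 < t) : ∃ i, f i < iInf f + t ∧ g i < iInf g + t := by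
  have hα' : 0 < 1 - α := sub_pos.2 hα.2
  obtain ⟨i, hi⟩ : ∃ i, (1 - α) * f i + α * g i <
      (1 - α) * iInf f + α * iInf g + min (1 - α) α * t :=
    exists_lt_of_ciInf_lt (by rw [h]; linarith [mul_pos (lt_min hα' hα.1) ht])
  have hfi := mul_le_mul_of_nonneg_left (ciInf_le hf i) hα'.le
  have hgi := mul_le_mul_of_nonneg_left (ciInf_le hg i) hα.1.le
  have hmin₁ := mul_le_mul_of_nonneg_right (min_le_left (1 - α) α) ht.le
  have hmin₂ := mul_le_mul_of_nonneg_right (min_le_right (1 - α) α) ht.le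
  refine ⟨i, lt_of_mul_lt_mul_left ?_ hα'.le, lt_of_mul_lt_mul_left ?_ hα.1.le⟩ <;>
    rw [mul_add] <;> linarith

end Infima

lemma le_add_of_forall_affine_le {a b c d e : ℝ}
    (h : ∀ β ∈ Ico (0 : ℝ) 1, (1 - β) * a + β * b ≤ (1 - β) * c + β * d + e) : b ≤ d + e := by
  have hcont : Continuous fun β : ℝ => (1 - β) * c + β * d + e - ((1 - β) * a + β * b) := by
    fun_prop
  have hlim := (hcont.tendsto 1).mono_left (nhdsWithin_le_nhds (s := Iio 1))
  have := ge_of_tendsto hlim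
    (eventually_of_mem (Ico_mem_nhdsLT one_pos) fun β hβ => sub_nonneg.2 (h β hβ))
  norm_num at this
  linarith

lemma exists_abs_le_of_finite {α : Type*} (ℓ : α → α → ℝ) {s : Set α} (hs : s.Finite) :
    ∃ B, ∀ y₁ ∈ s, ∀ y₂ ∈ s, |ℓ y₁ y₂| ≤ B := by
  obtain ⟨B, hB⟩ := ((hs.prod hs).image fun q => |ℓ q.1 q.2|).bddAbove
  exact ⟨B, fun y₁ h₁ y₂ h₂ => hB ⟨(y₁, y₂), ⟨h₁, h₂⟩, rfl⟩⟩

namespace Domain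

lemma ae_label_mem_Icc (D : Domain 𝒳 K) : ∀ᵐ p ∂D.DI, p.2 ∈ Icc 1 K := ae_iff.2 D.suppI

lemma ae_label_eq (D : Domain 𝒳 K) : ∀ᵐ p ∂D.DO, p.2 = K + 1 := ae_iff.2 D.suppO

end Domain

instance isProbabilityMeasure_sampleMeasure (D : Domain 𝒳 K) (n : ℕ) :
    IsProbabilityMeasure (sampleMeasure D n) := by
  have := D.probI
  rw [sampleMeasure]
  infer_instance

lemma measurable_loss_comp (ℓ : ℕ → ℕ → ℝ) {h : 𝒳 → ℕ} (hm : Measurable h) :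
    Measurable fun p : 𝒳 × ℕ => ℓ (h p.1) p.2 :=
  (measurable_of_countable fun q : ℕ × ℕ => ℓ q.1 q.2).comp
    ((hm.comp measurable_fst).prodMk measurable_snd)

lemma riskOut_eq_integral (ℓ : ℕ → ℕ → ℝ) (D : Domain 𝒳 K) (h : 𝒳 → ℕ) :
    riskOut ℓ D h = ∫ p, ℓ (h p.1) p.2 ∂D.DO :=
  integral_congr_ae (D.ae_label_eq.mono fun p hp => by simp only [hp])

section Risk

variable {ℓ : ℕ → ℕ → ℝ} {B : ℝ} {h : 𝒳 → ℕ}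

lemma ae_norm_loss_le_DI (hB : ∀ y₁ ∈ Icc 1 (K + 1), ∀ y₂ ∈ Icc 1 (K + 1), |ℓ y₁ y₂| ≤ B)
    (hh : ∀ x, h x ∈ Icc 1 (K + 1)) (D : Domain 𝒳 K) :
    ∀ᵐ p ∂D.DI, ‖ℓ (h p.1) p.2‖ ≤ B := by
  filter_upwards [D.ae_label_mem_Icc] with p hp
  exact hB _ (hh _) _ ⟨hp.1, hp.2.trans K.le_succ⟩

lemma ae_norm_loss_le_DO (hB : ∀ y₁ ∈ Icc 1 (K + 1), ∀ y₂ ∈ Icc 1 (K + 1), |ℓ y₁ y₂| ≤ B)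
    (hh : ∀ x, h x ∈ Icc 1 (K + 1)) (D : Domain 𝒳 K) :
    ∀ᵐ p ∂D.DO, ‖ℓ (h p.1) p.2‖ ≤ B := by
  filter_upwards [D.ae_label_eq] with p hp
  rw [hp]
  exact hB _ (hh _) _ ⟨Nat.le_add_left 1 K, le_rfl⟩

lemma abs_riskIn_le (hB : ∀ y₁ ∈ Icc 1 (K + 1), ∀ y₂ ∈ Icc 1 (K + 1), |ℓ y₁ y₂| ≤ B)
    (hh : ∀ x, h x ∈ Icc 1 (K + 1)) (D : Domain 𝒳 K) : |riskIn ℓ D h| ≤ B := by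
  have := D.probI
  simpa [riskIn] using norm_integral_le_of_norm_le_const (ae_norm_loss_le_DI hB hh D)

lemma abs_riskOut_le (hB : ∀ y₁ ∈ Icc 1 (K + 1), ∀ y₂ ∈ Icc 1 (K + 1), |ℓ y₁ y₂| ≤ B)
    (hh : ∀ x, h x ∈ Icc 1 (K + 1)) (D : Domain 𝒳 K) : |riskOut ℓ D h| ≤ B := by
  have := D.probO
  simpa [riskOut_eq_integral] using norm_integral_le_of_norm_le_const (ae_norm_loss_le_DO hB hh D)

lemma risk_withPrior (hB : ∀ y₁ ∈ Icc 1 (K + 1), ∀ y₂ ∈ Icc 1 (K + 1), |ℓ y₁ y₂| ≤ B)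
    (hm : Measurable h) (hh : ∀ x, h x ∈ Icc 1 (K + 1)) (D : Domain 𝒳 K) (α : Ico (0 : ℝ) 1) :
    risk ℓ (D.withPrior α) h = riskA ℓ D h α := by
  have := D.probI
  have := D.probO
  have hI := Integrable.of_bound (measurable_loss_comp ℓ hm).aestronglyMeasurable B
    (ae_norm_loss_le_DI hB hh D)
  have hO := Integrable.of_bound (measurable_loss_comp ℓ hm).aestronglyMeasurable B
    (ae_norm_loss_le_DO hB hh D)
  rw [risk, Domain.joint, Domain.withPrior,
    integral_add_measure (hI.smul_measure ENNReal.ofReal_ne_top)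
      (hO.smul_measure ENNReal.ofReal_ne_top),
    integral_smul_measure, integral_smul_measure,
    ENNReal.toReal_ofReal (sub_nonneg.2 α.2.2.le), ENNReal.toReal_ofReal α.2.1,
    ← riskOut_eq_integral]
  rfl

end Risk

section RiskBounds

variable {ℓ : ℕ → ℕ → ℝ} {B : ℝ} {H : Set (𝒳 → ℕ)}

lemma bddBelow_riskIn (hB : ∀ y₁ ∈ Icc 1 (K + 1), ∀ y₂ ∈ Icc 1 (K + 1), |ℓ y₁ y₂| ≤ B)
    (hH : ∀ h ∈ H, ∀ x, h x ∈ Icc 1 (K + 1)) (D : Domain 𝒳 K) :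
    BddBelow (range fun h : H => riskIn ℓ D h) :=
  ⟨-B, by rintro _ ⟨h, rfl⟩; exact neg_le_of_abs_le (abs_riskIn_le hB (hH h h.2) D)⟩

lemma bddBelow_riskOut (hB : ∀ y₁ ∈ Icc 1 (K + 1), ∀ y₂ ∈ Icc 1 (K + 1), |ℓ y₁ y₂| ≤ B)
    (hH : ∀ h ∈ H, ∀ x, h x ∈ Icc 1 (K + 1)) (D : Domain 𝒳 K) :
    BddBelow (range fun h : H => riskOut ℓ D h) :=
  ⟨-B, by rintro _ ⟨h, rfl⟩; exact neg_le_of_abs_le (abs_riskOut_le hB (hH h h.2) D)⟩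

lemma bddBelow_riskA (hB : ∀ y₁ ∈ Icc 1 (K + 1), ∀ y₂ ∈ Icc 1 (K + 1), |ℓ y₁ y₂| ≤ B)
    (hH : ∀ h ∈ H, ∀ x, h x ∈ Icc 1 (K + 1)) (D : Domain 𝒳 K) {α : ℝ}
    (hα : α ∈ Icc (0 : ℝ) 1) : BddBelow (range fun h : H => riskA ℓ D h α) := by
  refine ⟨-B, ?_⟩
  rintro _ ⟨h, rfl⟩
  calc -B = (1 - α) * -B + α * -B := by ring
    _ ≤ riskA ℓ D h α :=
      add_le_add
        (mul_le_mul_of_nonneg_left (neg_le_of_abs_le (abs_riskIn_le hB (hH h h.2) D))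
          (sub_nonneg.2 hα.2))
        (mul_le_mul_of_nonneg_left (neg_le_of_abs_le (abs_riskOut_le hB (hH h h.2) D)) hα.1)

end RiskBounds

def singleDistributionSpace (D : Domain 𝒳 K) : Set (Domain 𝒳 K) :=
  {D' | ∃ α : Ico (0 : ℝ) 1, D' = D.withPrior α}

section Consistency

variable {ℓ : ℕ → ℕ → ℝ} {B : ℝ} {H : Set (𝒳 → ℕ)} {D : Domain 𝒳 K} {A : Algorithm 𝒳 ℕ}
  {ε : ℕ → ℝ} {n : ℕ}
  (hB : ∀ y₁ ∈ Icc 1 (K + 1), ∀ y₂ ∈ Icc 1 (K + 1), |ℓ y₁ y₂| ≤ B)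
  (hH : ∀ h ∈ H, Measurable h ∧ ∀ x, h x ∈ Icc 1 (K + 1))
  (hA : ConsistentRisk ℓ (singleDistributionSpace D) H A ε) (hn : 1 ≤ n)
include hB hH hA hn

lemma ConsistentRisk.risk_withPrior_eq (α : Ico (0 : ℝ) 1) (S : Fin n → 𝒳 × ℕ) :
    risk ℓ (D.withPrior α) (A n S) = riskA ℓ D (A n S) α :=
  risk_withPrior hB (hH _ (hA.1 n hn S)).1 (hH _ (hA.1 n hn S)).2 D α

lemma ConsistentRisk.measurable_riskA (α : Ico (0 : ℝ) 1) :
    Measurable fun S => riskA ℓ D (A n S) α := by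
  have hmeas := hA.2.1 _ ⟨α, rfl⟩ n hn
  simp only [hA.risk_withPrior_eq hB hH hn] at hmeas
  exact hmeas

lemma ConsistentRisk.integrable_riskIn :
    Integrable (fun S => riskIn ℓ D (A n S)) (sampleMeasure D n) := by
  have hmeas := hA.measurable_riskA hB hH hn ⟨0, le_rfl, one_pos⟩
  simp only [riskA, sub_zero, one_mul, zero_mul, add_zero] at hmeas
  exact Integrable.of_bound hmeas.aestronglyMeasurable B
    (Eventually.of_forall fun S => abs_riskIn_le hB (hH _ (hA.1 n hn S)).2 D)

/-- Measurability in the sample comes from `R^out = 2 R^{1/2} - R^0`. -/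
lemma ConsistentRisk.integrable_riskOut :
    Integrable (fun S => riskOut ℓ D (A n S)) (sampleMeasure D n) := by
  have hmeas : Measurable fun S => riskOut ℓ D (A n S) := by
    convert ((hA.measurable_riskA hB hH hn ⟨1 / 2, by norm_num, by norm_num⟩).const_mul 2).sub
      (hA.measurable_riskA hB hH hn ⟨0, le_rfl, one_pos⟩) using 1
    funext S
    simp only [riskA, Pi.sub_apply]
    ring
  exact Integrable.of_bound hmeas.aestronglyMeasurable B
    (Eventually.of_forall fun S => abs_riskOut_le hB (hH _ (hA.1 n hn S)).2 D)

lemma ConsistentRisk.integrable_riskA (α : ℝ) :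
    Integrable (fun S => riskA ℓ D (A n S) α) (sampleMeasure D n) :=
  ((hA.integrable_riskIn hB hH hn).const_mul _).add ((hA.integrable_riskOut hB hH hn).const_mul _)

lemma ConsistentRisk.integral_riskA (α : ℝ) :
    ∫ S, riskA ℓ D (A n S) α ∂sampleMeasure D n =
      (1 - α) * ∫ S, riskIn ℓ D (A n S) ∂sampleMeasure D n +
        α * ∫ S, riskOut ℓ D (A n S) ∂sampleMeasure D n := by
  simp only [riskA]
  rw [integral_add ((hA.integrable_riskIn hB hH hn).const_mul _)
      ((hA.integrable_riskOut hB hH hn).const_mul _),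
    integral_const_mul, integral_const_mul]

lemma ConsistentRisk.integral_riskA_le (α : Ico (0 : ℝ) 1) {h : 𝒳 → ℕ} (hh : h ∈ H) :
    ∫ S, riskA ℓ D (A n S) α ∂sampleMeasure D n ≤ riskA ℓ D h α + ε n := by
  have hexcess := hA.2.2 _ ⟨α, rfl⟩ n hn
  have hinf : ⨅ h : H, risk ℓ (D.withPrior α) h = ⨅ h : H, riskA ℓ D h α :=
    iInf_congr fun h => risk_withPrior hB (hH h h.2).1 (hH h h.2).2 D α
  simp only [hA.risk_withPrior_eq hB hH hn, hinf] at hexcess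
  change ∫ S, (riskA ℓ D (A n S) α - ⨅ h : H, riskA ℓ D h α) ∂sampleMeasure D n ≤ ε n at hexcess
  rw [integral_sub (hA.integrable_riskA hB hH hn α) (integrable_const _), integral_const,
    probReal_univ, one_smul] at hexcess
  have := ciInf_le (bddBelow_riskA hB (fun h hh => (hH h hh).2) D (Ico_subset_Icc_self α.2))
    ⟨h, hh⟩
  linarith

lemma ConsistentRisk.iInf_riskA_le [Nonempty H] {α : ℝ} (hα : α ∈ Icc (0 : ℝ) 1) :
    ⨅ h : H, riskA ℓ D h α ≤
      (1 - α) * (⨅ h : H, riskIn ℓ D h) + α * (⨅ h : H, riskOut ℓ D h) + ε n := by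
  set I := ∫ S, riskIn ℓ D (A n S) ∂sampleMeasure D n
  set O := ∫ S, riskOut ℓ D (A n S) ∂sampleMeasure D n
  have hI : I ≤ (⨅ h : H, riskIn ℓ D h) + ε n := by
    rw [← sub_le_iff_le_add]
    refine le_ciInf fun h => sub_le_iff_le_add.2 ?_
    simpa [riskA, hA.integral_riskA hB hH hn] using
      hA.integral_riskA_le hB hH hn ⟨0, le_rfl, one_pos⟩ h.2
  -- priors are `< 1`, so the OOD risk is reached only in the limit `β → 1`
  have hO : O ≤ (⨅ h : H, riskOut ℓ D h) + ε n := by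
    rw [← sub_le_iff_le_add]
    refine le_ciInf fun h => sub_le_iff_le_add.2
      (le_add_of_forall_affine_le (a := I) (c := riskIn ℓ D h) fun β hβ => ?_)
    rw [← hA.integral_riskA hB hH hn]
    exact hA.integral_riskA_le hB hH hn ⟨β, hβ⟩ h.2
  have hle : ⨅ h : H, riskA ℓ D h α ≤ (1 - α) * I + α * O := by
    rw [← hA.integral_riskA hB hH hn]
    calc ⨅ h : H, riskA ℓ D h α = ∫ _, ⨅ h : H, riskA ℓ D h α ∂sampleMeasure D n := by
          rw [integral_const, probReal_univ, one_smul]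
      _ ≤ _ := integral_mono (integrable_const _) (hA.integrable_riskA hB hH hn α) fun S =>
          ciInf_le (bddBelow_riskA hB (fun h hh => (hH h hh).2) D hα) ⟨A n S, hA.1 n hn S⟩
  calc ⨅ h : H, riskA ℓ D h α ≤ (1 - α) * I + α * O := hle
    _ ≤ (1 - α) * ((⨅ h : H, riskIn ℓ D h) + ε n) + α * ((⨅ h : H, riskOut ℓ D h) + ε n) :=
      add_le_add (mul_le_mul_of_nonneg_left hI (sub_nonneg.2 hα.2))
        (mul_le_mul_of_nonneg_left hO hα.1)
    _ = _ := by ring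

end Consistency

section Learnability

variable {ℓ : ℕ → ℕ → ℝ} {B : ℝ} {H : Set (𝒳 → ℕ)} {D : Domain 𝒳 K}

theorem iInf_riskA_eq_of_learnableRisk [Nonempty H]
    (hB : ∀ y₁ ∈ Icc 1 (K + 1), ∀ y₂ ∈ Icc 1 (K + 1), |ℓ y₁ y₂| ≤ B)
    (hH : ∀ h ∈ H, Measurable h ∧ ∀ x, h x ∈ Icc 1 (K + 1))
    (hL : LearnableRisk ℓ (singleDistributionSpace D) H) {α : ℝ} (hα : α ∈ Icc (0 : ℝ) 1) :
    ⨅ h : H, riskA ℓ D h α = (1 - α) * (⨅ h : H, riskIn ℓ D h) + α * (⨅ h : H, riskOut ℓ D h) := by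
  obtain ⟨ε, -, hε, A, hA⟩ := hL
  refine le_antisymm ?_ (affine_iInf_le_iInf_affine (bddBelow_riskIn hB (fun h hh => (hH h hh).2) D)
    (bddBelow_riskOut hB (fun h hh => (hH h hh).2) D) hα)
  have hlim := hε.const_add ((1 - α) * (⨅ h : H, riskIn ℓ D h) + α * (⨅ h : H, riskOut ℓ D h))
  rw [add_zero] at hlim
  exact ge_of_tendsto hlim (eventually_atTop.2 ⟨1, fun n hn => hA.iInf_riskA_le hB hH hn hα⟩)

theorem learnableRisk_of_iInf_riskA_eq [Nonempty H]
    (hB : ∀ y₁ ∈ Icc 1 (K + 1), ∀ y₂ ∈ Icc 1 (K + 1), |ℓ y₁ y₂| ≤ B)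
    (hH : ∀ h ∈ H, Measurable h ∧ ∀ x, h x ∈ Icc 1 (K + 1))
    (hlin : ∀ α ∈ Ico (0 : ℝ) 1, ⨅ h : H, riskA ℓ D h α =
      (1 - α) * (⨅ h : H, riskIn ℓ D h) + α * (⨅ h : H, riskOut ℓ D h)) :
    LearnableRisk ℓ (singleDistributionSpace D) H := by
  choose φ hφ using fun n : ℕ => exists_lt_iInf_add_of_iInf_affine_eq
    (bddBelow_riskIn hB (fun h hh => (hH h hh).2) D)
    (bddBelow_riskOut hB (fun h hh => (hH h hh).2) D) (α := 1 / 2) ⟨by norm_num, by norm_num⟩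
    (hlin _ ⟨by norm_num, by norm_num⟩) (Nat.one_div_pos_of_nat (n := n))
  refine ⟨fun n => 1 / (n + 1), fun m n hmn => Nat.one_div_le_one_div hmn,
    tendsto_one_div_add_atTop_nhds_zero_nat, fun n _ => φ n, fun n _ _ => (φ n).2,
    fun _ _ _ _ => measurable_const, ?_⟩
  rintro _ ⟨α, rfl⟩ n -
  have hrisk : ∀ h : H, risk ℓ (D.withPrior α) h = riskA ℓ D h α := fun h =>
    risk_withPrior hB (hH h h.2).1 (hH h h.2).2 D α
  simp only [integral_const, probReal_univ, one_smul, hrisk]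
  rw [hlin α α.2]
  simp only [riskA]
  obtain ⟨hIn, hOut⟩ := hφ n
  nlinarith [mul_le_mul_of_nonneg_left hIn.le (sub_nonneg.2 α.2.2.le),
    mul_le_mul_of_nonneg_left hOut.le α.2.1]

end Learnability

theorem stmt1_general {d K : ℕ} (X : Set (EuclideanSpace ℝ (Fin d)))
    (ℓ : ℕ → ℕ → ℝ)
    (H : Set (↥X → ℕ)) (hHne : H.Nonempty)
    (hH : ∀ h ∈ H, Measurable h ∧ ∀ x, h x ∈ Set.Icc 1 (K + 1))
    (D : Domain ↥X K) :
    LearnableRisk ℓ {D' | ∃ α : Set.Ico (0 : ℝ) 1, D' = D.withPrior α} H ↔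
      ∀ α ∈ Set.Ico (0 : ℝ) 1,
        (⨅ h : H, riskA ℓ D h.1 α)
          = (1 - α) * (⨅ h : H, riskIn ℓ D h.1) + α * (⨅ h : H, riskOut ℓ D h.1) := by
  obtain ⟨B, hB⟩ := exists_abs_le_of_finite ℓ (finite_Icc 1 (K + 1))
  have := hHne.to_subtype
  exact ⟨fun hL α hα => iInf_riskA_eq_of_learnableRisk hB hH hL (Ico_subset_Icc_self hα),
    learnableRisk_of_iInf_riskA_eq hB hH⟩

/-- Theorem 3 of the paper.  For a single domain `D`, OOD detection is
learnable under risk in the single-distribution space `𝒟^{D} = {D^α : α ∈ [0,1)}` for `H`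
iff the linear condition under risk holds:
`inf_{h∈H} R_D^α(h) = (1-α)·inf_{h∈H} R_D^in(h) + α·inf_{h∈H} R_D^out(h)` for all `α ∈ [0,1)`. -/
theorem stmt1 {d K : ℕ} (X : Set (EuclideanSpace ℝ (Fin d)))
    (ℓ : ℕ → ℕ → ℝ)
    (hl_nonneg : ∀ y₁ y₂, 0 ≤ ℓ y₁ y₂)
    (hl_zero : ∀ y₁ ∈ Set.Icc 1 (K + 1), ∀ y₂ ∈ Set.Icc 1 (K + 1), (ℓ y₁ y₂ = 0 ↔ y₁ = y₂))
    (hl_bdd : ∃ B, ∀ y₁ ∈ Set.Icc 1 (K + 1), ∀ y₂ ∈ Set.Icc 1 (K + 1), ℓ y₁ y₂ ≤ B)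
    (H : Set (↥X → ℕ)) (hHne : H.Nonempty)
    (hH : ∀ h ∈ H, Measurable h ∧ ∀ x, h x ∈ Set.Icc 1 (K + 1))
    (D : Domain ↥X K) :
    LearnableRisk ℓ {D' | ∃ α : Set.Ico (0 : ℝ) 1, D' = D.withPrior α} H ↔
      ∀ α ∈ Set.Ico (0 : ℝ) 1,
        (⨅ h : H, riskA ℓ D h.1 α)
          = (1 - α) * (⨅ h : H, riskIn ℓ D h.1) + α * (⨅ h : H, riskOut ℓ D h.1) :=
  stmt1_general X ℓ H hHne hH D

end OODF

end
end

section
/- Let 𝒟 be a prior-unknown domain space and H a hypothesis space. If OOD detection is learnable under risk in 𝒟 for H, then both (i) the linear condition under risk holds: for every D_XY ∈ 𝒟 and every α ∈ [0,1), inf_{h∈H} R_D^α(h) = (1−α)·inf_{h∈H} R_D^in(h) + α·inf_{h∈H} R_D^out(h); and (ii) the multi-linear condition holds: for every OOD convex domain D_XY ∈ 𝒟 corresponding to an OOD convex decomposition Q₁,…,Q_l, the function f_{D,Q}(α₁,…,α_l) := inf_{h∈H} ((1−Σ_j α_j)·R_D^in(h) + Σ_j α_j·R_{Q_j}(h)),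 defined for (α₁,…,α_l) ∈ Δ_l^o, satisfies f_{D,Q}(α₁,…,α_l) = (1−Σ_j α_j)·f_{D,Q}(0) + Σ_j α_j·f_{D,Q}(e_j), where e_j is the vector whose j-th entry is 1 and all other entries are 0. -/
open MeasureTheory Filter Set
open scoped ENNReal NNReal

noncomputable section

namespace OODF

variable {𝒳 : Type*} [MeasurableSpace 𝒳] {K : ℕ}

/-- `Q` is an OOD joint distribution: a probability measure on `𝒳 × {K+1}` -/
def IsOODDistr (K : ℕ) (Q : Measure (𝒳 × ℕ)) : Prop :=
  IsProbabilityMeasure Q ∧ Q {p | p.2 ≠ K + 1} = 0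

/-- the risk `R_Q(h)` of `h` w.r.t. an OOD joint distribution `Q` -/
def riskQ (ℓ : ℕ → ℕ → ℝ) (K : ℕ) (Q : Measure (𝒳 × ℕ)) (h : 𝒳 → ℕ) : ℝ :=
  ∫ p, ℓ (h p.1) (K + 1) ∂Q

/-- the open sub-simplex `Δ_l^o` -/
def simplexO (l : ℕ) : Set (Fin l → ℝ) :=
  {a | (∀ j, 0 ≤ a j) ∧ ∑ j, a j < 1}

/-- the function `f_{D,Q}` appearing in the multi-linear condition:
`f_{D,Q}(α₁,…,α_l) = inf_{h∈H} ((1-Σ_j α_j)·R_D^in(h) + Σ_j α_j·R_{Q_j}(h))` -/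
def fDQ (ℓ : ℕ → ℕ → ℝ) (D : Domain 𝒳 K) (H : Set (𝒳 → ℕ)) {l : ℕ}
    (Q : Fin l → Measure (𝒳 × ℕ)) (a : Fin l → ℝ) : ℝ :=
  ⨅ h : H, ((1 - ∑ j, a j) * riskIn ℓ D h.1 + ∑ j, a j * riskQ ℓ K (Q j) h.1)

/-!
All the domains `(1 - ∑ⱼ αⱼ) D_I + ∑ⱼ αⱼ Qⱼ` share the ID distribution `D_I`, so the learner sees
the same samples for all of them, and the risk of its output is affine in `α`. Averaging over
the sample, the affine function `α ↦ E[R_α(A(S))]` stays within `ε(n)` of the concave function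
`f_{D,Q}` on the open simplex; by continuity it does so also at the vertices `0` and `eⱼ`, where
`f_{D,Q}` is the infimum of `R^in` resp. of `R_{Qⱼ}`. Hence
`f_{D,Q}(α) ≤ E[R_α(A(S))] ≤ (1 - ∑ⱼ αⱼ) f_{D,Q}(0) + ∑ⱼ αⱼ f_{D,Q}(eⱼ) + ε(n)`, and the converse
inequality holds because an infimum of affine functions is concave. The linear condition is the
case `l = 1`, `Q₁ = D_O`.
-/

section Mixture

variable {ι : Type*} [Fintype ι]

def mixture (b : ι → ℝ) (x₀ : ℝ) (x : ι → ℝ) : ℝ :=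
  (1 - ∑ j, b j) * x₀ + ∑ j, b j * x j

theorem mixture_zero (x₀ : ℝ) (x : ι → ℝ) : mixture 0 x₀ x = x₀ := by
  simp [mixture]

theorem mixture_single [DecidableEq ι] (j : ι) (β x₀ : ℝ) (x : ι → ℝ) :
    mixture (Pi.single j β) x₀ x = (1 - β) * x₀ + β * x j := by
  simp [mixture, Pi.single_apply]

theorem mixture_single_one [DecidableEq ι] (j : ι) (x₀ : ℝ) (x : ι → ℝ) :
    mixture (Pi.single j 1) x₀ x = x j := by
  simp [mixture_single]

theorem mixture_const (b : ι → ℝ) (c : ℝ) : mixture b c (fun _ => c) = c := by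
  simp only [mixture, ← Finset.sum_mul]
  ring

theorem mixture_add_const (b : ι → ℝ) (x₀ : ℝ) (x : ι → ℝ) (c : ℝ) :
    mixture b (x₀ + c) (fun j => x j + c) = mixture b x₀ x + c := by
  simp only [mixture, mul_add, Finset.sum_add_distrib, ← Finset.sum_mul]
  ring

variable {b : ι → ℝ}

theorem mixture_mono (hb : ∀ j, 0 ≤ b j) (hb1 : ∑ j, b j ≤ 1) {x₀ y₀ : ℝ} {x y : ι → ℝ}
    (h₀ : x₀ ≤ y₀) (h : ∀ j, x j ≤ y j) : mixture b x₀ x ≤ mixture b y₀ y :=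
  add_le_add (mul_le_mul_of_nonneg_left h₀ (sub_nonneg.2 hb1))
    (Finset.sum_le_sum fun j _ => mul_le_mul_of_nonneg_left (h j) (hb j))

theorem mixture_mem_Icc (hb : ∀ j, 0 ≤ b j) (hb1 : ∑ j, b j ≤ 1) {x₀ B : ℝ} {x : ι → ℝ}
    (h₀ : x₀ ∈ Icc 0 B) (h : ∀ j, x j ∈ Icc 0 B) : mixture b x₀ x ∈ Icc 0 B := by
  constructor
  · calc 0 = mixture b 0 (fun _ => 0) := (mixture_const b 0).symm
      _ ≤ mixture b x₀ x := mixture_mono hb hb1 h₀.1 fun j => (h j).1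
  · calc mixture b x₀ x ≤ mixture b B (fun _ => B) := mixture_mono hb hb1 h₀.2 fun j => (h j).2
      _ = B := mixture_const b B

theorem mixture_iInf_le_iInf_mixture {𝓗 : Type*} [Nonempty 𝓗] (hb : ∀ j, 0 ≤ b j)
    (hb1 : ∑ j, b j ≤ 1) {r₀ : 𝓗 → ℝ} {r : ι → 𝓗 → ℝ} (hr₀ : BddBelow (range r₀))
    (hr : ∀ j, BddBelow (range (r j))) :
    mixture b (⨅ h, r₀ h) (fun j => ⨅ h, r j h) ≤ ⨅ h, mixture b (r₀ h) (fun j => r j h) :=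
  le_ciInf fun h => mixture_mono hb hb1 (ciInf_le hr₀ h) fun j => ciInf_le (hr j) h

variable {Ω : Type*} [MeasurableSpace Ω] {μ : Measure Ω} {U₀ : Ω → ℝ} {U : ι → Ω → ℝ}

theorem integrable_mixture (b : ι → ℝ) (h₀ : Integrable U₀ μ) (h : ∀ j, Integrable (U j) μ) :
    Integrable (fun ω => mixture b (U₀ ω) (fun j => U j ω)) μ :=
  (h₀.const_mul _).add (integrable_finsetSum _ fun j _ => (h j).const_mul _)

theorem integral_mixture (b : ι → ℝ) (h₀ : Integrable U₀ μ) (h : ∀ j, Integrable (U j) μ) :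
    ∫ ω, mixture b (U₀ ω) (fun j => U j ω) ∂μ
      = mixture b (∫ ω, U₀ ω ∂μ) (fun j => ∫ ω, U j ω ∂μ) := by
  simp only [mixture]
  rw [integral_add (h₀.const_mul _) (integrable_finsetSum _ fun j _ => (h j).const_mul _),
    integral_const_mul, integral_finsetSum _ fun j _ => (h j).const_mul _]
  simp only [integral_const_mul]

end Mixture

section Simplex

variable {l : ℕ}

theorem zero_mem_simplexO : (0 : Fin l → ℝ) ∈ simplexO l := by
  simp [simplexO]

theorem single_mem_simplexO (j : Fin l) {c : ℝ} (hc₀ : 0 ≤ c) (hc₁ : c < 1) :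
    (Pi.single j c : Fin l → ℝ) ∈ simplexO l := by
  refine ⟨fun k => ?_, by simpa using hc₁⟩
  rcases eq_or_ne k j with rfl | hk
  · simpa using hc₀
  · simp [hk]

theorem measurable_of_forall_measurable_mixture {Ω : Type*} [MeasurableSpace Ω] {U₀ : Ω → ℝ}
    {U : Fin l → Ω → ℝ}
    (h : ∀ b ∈ simplexO l, Measurable fun ω => mixture b (U₀ ω) (fun j => U j ω)) :
    Measurable U₀ ∧ ∀ j, Measurable (U j) := by
  have h₀ : Measurable U₀ := by simpa only [mixture_zero] using h 0 zero_mem_simplexO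
  refine ⟨h₀, fun j => ?_⟩
  have hj := h (Pi.single j (1 / 2)) (single_mem_simplexO j (by norm_num) (by norm_num))
  simp only [mixture_single] at hj
  have hU : U j = fun ω => 2 * ((1 - 1 / 2) * U₀ ω + 1 / 2 * U j ω) - U₀ ω := by
    funext ω
    ring
  rw [hU]
  exact (hj.const_mul 2).sub h₀

open Topology in
theorem le_of_forall_mixture_le {x₀ y₀ : ℝ} {x y : Fin l → ℝ}
    (h : ∀ b ∈ simplexO l, mixture b x₀ x ≤ mixture b y₀ y) : x₀ ≤ y₀ ∧ ∀ j, x j ≤ y j := by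
  refine ⟨by simpa only [mixture_zero] using h 0 zero_mem_simplexO, fun j => ?_⟩
  have hlim : ∀ (z₀ : ℝ) (z : Fin l → ℝ),
      Tendsto (fun β : ℝ => mixture (Pi.single j β) z₀ z) (𝓝[<] 1) (𝓝 (z j)) := by
    intro z₀ z
    simp only [mixture_single]
    have hcont : Continuous fun β : ℝ => (1 - β) * z₀ + β * z j := by fun_prop
    simpa using (hcont.tendsto 1).mono_left nhdsWithin_le_nhds
  refine le_of_tendsto_of_tendsto (hlim x₀ x) (hlim y₀ y) ?_
  filter_upwards [Ioo_mem_nhdsLT (show (0 : ℝ) < 1 by norm_num)] with β hβ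
  exact h _ (single_mem_simplexO j hβ.1.le hβ.2)

end Simplex

section ExpectedExcess

variable {Ω 𝓗 : Type*} [MeasurableSpace Ω] {μ : Measure Ω} {l : ℕ}
  {Z : Ω → 𝓗} {r₀ : 𝓗 → ℝ} {r : Fin l → 𝓗 → ℝ} {B e : ℝ}

theorem integral_mem_Icc_of_ae_mem_Icc [IsProbabilityMeasure μ] {f : Ω → ℝ}
    (hf : ∀ᵐ ω ∂μ, f ω ∈ Icc 0 B) :
    ∫ ω, f ω ∂μ ∈ Icc 0 B := by
  refine ⟨integral_nonneg_of_ae (hf.mono fun ω hω => hω.1), ?_⟩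
  have hnorm : ∀ᵐ ω ∂μ, ‖f ω‖ ≤ B := hf.mono fun ω hω => by
    rw [Real.norm_eq_abs, abs_of_nonneg hω.1]
    exact hω.2
  simpa using (le_abs_self _).trans (norm_integral_le_of_norm_le_const hnorm)

theorem bddBelow_range_mixture {b : Fin l → ℝ} (hb : b ∈ simplexO l)
    (hr₀ : ∀ h, r₀ h ∈ Icc 0 B) (hr : ∀ j h, r j h ∈ Icc 0 B) :
    BddBelow (range fun h => mixture b (r₀ h) (fun j => r j h)) :=
  ⟨0, by rintro _ ⟨h, rfl⟩; exact (mixture_mem_Icc hb.1 hb.2.le (hr₀ h) (hr · h)).1⟩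

theorem integrable_of_forall_measurable_mixture [IsFiniteMeasure μ] (hr₀ : ∀ h, r₀ h ∈ Icc 0 B)
    (hr : ∀ j h, r j h ∈ Icc 0 B)
    (hmeas : ∀ b ∈ simplexO l, Measurable fun ω => mixture b (r₀ (Z ω)) (fun j => r j (Z ω))) :
    Integrable (fun ω => r₀ (Z ω)) μ ∧ ∀ j, Integrable (fun ω => r j (Z ω)) μ := by
  obtain ⟨hm₀, hm⟩ := measurable_of_forall_measurable_mixture hmeas
  exact ⟨.of_mem_Icc 0 B hm₀.aemeasurable (ae_of_all _ fun ω => hr₀ (Z ω)),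
    fun j => .of_mem_Icc 0 B (hm j).aemeasurable (ae_of_all _ fun ω => hr j (Z ω))⟩

variable [IsProbabilityMeasure μ] (hr₀ : ∀ h, r₀ h ∈ Icc 0 B) (hr : ∀ j h, r j h ∈ Icc 0 B)
  (hmeas : ∀ b ∈ simplexO l, Measurable fun ω => mixture b (r₀ (Z ω)) (fun j => r j (Z ω)))
  (hexcess : ∀ b ∈ simplexO l,
    ∫ ω, (mixture b (r₀ (Z ω)) (fun j => r j (Z ω)) - ⨅ h, mixture b (r₀ h) (fun j => r j h)) ∂μ
      ≤ e)
include hr₀ hr hmeas hexcess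

theorem integral_le_add_of_expected_excess_le (h : 𝓗) :
    ∫ ω, r₀ (Z ω) ∂μ ≤ r₀ h + e ∧ ∀ j, ∫ ω, r j (Z ω) ∂μ ≤ r j h + e := by
  obtain ⟨hi₀, hi⟩ := integrable_of_forall_measurable_mixture (μ := μ) hr₀ hr hmeas
  refine le_of_forall_mixture_le fun b hb => ?_
  have hexc := hexcess b hb
  rw [integral_sub (integrable_mixture b hi₀ hi) (integrable_const _), integral_const,
    probReal_univ, one_smul, integral_mixture b hi₀ hi] at hexc
  rw [mixture_add_const]
  linarith [ciInf_le (bddBelow_range_mixture hb hr₀ hr) h]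

theorem iInf_mixture_le_of_expected_excess_le {a : Fin l → ℝ} (ha : a ∈ simplexO l) :
    ⨅ h, mixture a (r₀ h) (fun j => r j h)
      ≤ mixture a (⨅ h, r₀ h) (fun j => ⨅ h, r j h) + e := by
  obtain ⟨hi₀, hi⟩ := integrable_of_forall_measurable_mixture (μ := μ) hr₀ hr hmeas
  have : Nonempty 𝓗 := (nonempty_of_isProbabilityMeasure μ).map Z
  have hle := integral_le_add_of_expected_excess_le hr₀ hr hmeas hexcess
  calc ⨅ h, mixture a (r₀ h) (fun j => r j h)
      = ∫ _, ⨅ h, mixture a (r₀ h) (fun j => r j h) ∂μ := by simp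
    _ ≤ ∫ ω, mixture a (r₀ (Z ω)) (fun j => r j (Z ω)) ∂μ :=
        integral_mono (integrable_const _) (integrable_mixture a hi₀ hi)
          fun ω => ciInf_le (bddBelow_range_mixture ha hr₀ hr) (Z ω)
    _ = mixture a (∫ ω, r₀ (Z ω) ∂μ) (fun j => ∫ ω, r j (Z ω) ∂μ) := integral_mixture a hi₀ hi
    _ ≤ mixture a ((⨅ h, r₀ h) + e) (fun j => (⨅ h, r j h) + e) :=
        mixture_mono ha.1 ha.2.le
          (sub_le_iff_le_add.1 (le_ciInf fun h => sub_le_iff_le_add.2 (hle h).1))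
          fun j => sub_le_iff_le_add.1 (le_ciInf fun h => sub_le_iff_le_add.2 ((hle h).2 j))
    _ = _ := mixture_add_const _ _ _ _

end ExpectedExcess

attribute [instance] Domain.probI

theorem Domain.ae_label_mem_Icc_s2 (D : Domain 𝒳 K) : ∀ᵐ p ∂D.DI, p.2 ∈ Icc 1 (K + 1) :=
  (ae_iff.2 D.suppI).mono fun _ hp => ⟨hp.1, hp.2.trans K.le_succ⟩

theorem IsOODDistr.ae_label_eq {Q : Measure (𝒳 × ℕ)} (hQ : IsOODDistr K Q) :
    ∀ᵐ p ∂Q, p.2 = K + 1 :=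
  ae_iff.2 hQ.2

theorem sampleMeasure_congr {D D' : Domain 𝒳 K} (h : D'.DI = D.DI) (n : ℕ) :
    sampleMeasure D' n = sampleMeasure D n := by
  cases D
  cases D'
  subst h
  rfl

instance (D : Domain 𝒳 K) (n : ℕ) : IsProbabilityMeasure (sampleMeasure D n) := by
  unfold sampleMeasure
  infer_instance

theorem riskIn_congr (ℓ : ℕ → ℕ → ℝ) {D D' : Domain 𝒳 K} (h : D'.DI = D.DI) (g : 𝒳 → ℕ) :
    riskIn ℓ D' g = riskIn ℓ D g := by
  rw [riskIn, h, riskIn]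

section Loss

variable {ℓ : ℕ → ℕ → ℝ} {B : ℝ} {g : 𝒳 → ℕ}
  (hℓ : ∀ y₁ y₂, 0 ≤ ℓ y₁ y₂) (hB : ∀ y₁ ∈ Icc 1 (K + 1), ∀ y₂ ∈ Icc 1 (K + 1), ℓ y₁ y₂ ≤ B)
  (hgK : ∀ x, g x ∈ Icc 1 (K + 1))
include hℓ hB hgK

theorem integrable_loss {μ : Measure (𝒳 × ℕ)} [IsFiniteMeasure μ]
    (hμ : ∀ᵐ p ∂μ, p.2 ∈ Icc 1 (K + 1)) (hg : Measurable g) :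
    Integrable (fun p => ℓ (g p.1) p.2) μ := by
  have hm : Measurable fun p : 𝒳 × ℕ => ℓ (g p.1) p.2 :=
    (measurable_of_countable fun q : ℕ × ℕ => ℓ q.1 q.2).comp
      ((hg.comp measurable_fst).prodMk measurable_snd)
  exact .of_mem_Icc 0 B hm.aemeasurable (hμ.mono fun _ hp => ⟨hℓ _ _, hB _ (hgK _) _ hp⟩)

theorem riskIn_mem_Icc (D : Domain 𝒳 K) : riskIn ℓ D g ∈ Icc 0 B :=
  integral_mem_Icc_of_ae_mem_Icc
    (D.ae_label_mem_Icc_s2.mono fun _ hp => ⟨hℓ _ _, hB _ (hgK _) _ hp⟩)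

theorem riskQ_mem_Icc {Q : Measure (𝒳 × ℕ)} [IsProbabilityMeasure Q] : riskQ ℓ K Q g ∈ Icc 0 B :=
  integral_mem_Icc_of_ae_mem_Icc
    (ae_of_all _ fun _ => ⟨hℓ _ _, hB _ (hgK _) _ (right_mem_Icc.2 (Nat.le_add_left 1 K))⟩)

theorem risk_eq_mixture (hg : Measurable g) {D : Domain 𝒳 K} {l : ℕ}
    {Q : Fin l → Measure (𝒳 × ℕ)} (hQ : ∀ j, IsOODDistr K (Q j)) {b : Fin l → ℝ}
    (hb : ∀ j, 0 ≤ b j) (hprior : D.prior = ∑ j, b j)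
    (hDO : ENNReal.ofReal D.prior • D.DO = ∑ j, ENNReal.ofReal (b j) • Q j) :
    risk ℓ D g = mixture b (riskIn ℓ D g) (fun j => riskQ ℓ K (Q j) g) := by
  have hQint : ∀ j, Integrable (fun p => ℓ (g p.1) p.2) (Q j) := fun j =>
    have := (hQ j).1
    integrable_loss hℓ hB hgK
      ((hQ j).ae_label_eq.mono fun _ hp => by rw [hp]; exact right_mem_Icc.2 (Nat.le_add_left 1 K))
      hg
  have hQrisk : ∀ j, ∫ p, ℓ (g p.1) p.2 ∂(Q j) = riskQ ℓ K (Q j) g := fun j =>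
    integral_congr_ae ((hQ j).ae_label_eq.mono fun p hp => by simp only [hp])
  rw [risk, Domain.joint, hDO,
    integral_add_measure
      ((integrable_loss hℓ hB hgK D.ae_label_mem_Icc_s2 hg).smul_measure ENNReal.ofReal_ne_top)
      (integrable_finsetSum_measure.2 fun j _ => (hQint j).smul_measure ENNReal.ofReal_ne_top),
    integral_smul_measure, integral_finsetSum_measure fun j _ =>
      (hQint j).smul_measure ENNReal.ofReal_ne_top,
    ENNReal.toReal_ofReal (sub_nonneg.2 D.prior_mem.2.le), hprior]
  refine congrArg _ (Finset.sum_congr rfl fun j _ => ?_)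
  rw [integral_smul_measure, ENNReal.toReal_ofReal (hb j), hQrisk]
  rfl

end Loss

theorem ConsistentRisk.integral_excess_le_of_risk_eq {ℓ : ℕ → ℕ → ℝ} {𝒟 : Set (Domain 𝒳 K)}
    {H : Set (𝒳 → ℕ)} {A : Algorithm 𝒳 ℕ} {ε : ℕ → ℝ} (hA : ConsistentRisk ℓ 𝒟 H A ε)
    {D : Domain 𝒳 K} (hD : D ∈ 𝒟) {n : ℕ} (hn : 1 ≤ n) (R : (𝒳 → ℕ) → ℝ)
    (hR : ∀ g ∈ H, risk ℓ D g = R g) :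
    (Measurable fun S => R (A n S)) ∧
      ∫ S, (R (A n S) - ⨅ g : H, R g.1) ∂(sampleMeasure D n) ≤ ε n := by
  obtain ⟨hAH, hAmeas, hAexcess⟩ := hA
  have hRA : ∀ S, risk ℓ D (A n S) = R (A n S) := fun S => hR _ (hAH n hn S)
  have hinf : ⨅ g : H, risk ℓ D g.1 = ⨅ g : H, R g.1 := iInf_congr fun g => hR g.1 g.2
  have hmeas := hAmeas D hD n hn
  have hexcess := hAexcess D hD n hn
  simp only [hRA, hinf] at hmeas hexcess
  exact ⟨hmeas, hexcess⟩

section Learnable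

variable {ℓ : ℕ → ℕ → ℝ} {B : ℝ} {H : Set (𝒳 → ℕ)} {𝒟 : Set (Domain 𝒳 K)} {l : ℕ}
  {Q : Fin l → Measure (𝒳 × ℕ)} {D : Domain 𝒳 K}

theorem fDQ_eq_iInf_mixture (a : Fin l → ℝ) :
    fDQ ℓ D H Q a = ⨅ g : H, mixture a (riskIn ℓ D g.1) (fun j => riskQ ℓ K (Q j) g.1) :=
  rfl

theorem fDQ_zero : fDQ ℓ D H Q 0 = ⨅ g : H, riskIn ℓ D g.1 := by
  simp only [fDQ_eq_iInf_mixture, mixture_zero]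

theorem fDQ_single_one (j : Fin l) :
    fDQ ℓ D H Q (Pi.single j 1) = ⨅ g : H, riskQ ℓ K (Q j) g.1 := by
  simp only [fDQ_eq_iInf_mixture, mixture_single_one]

variable (hℓ : ∀ y₁ y₂, 0 ≤ ℓ y₁ y₂) (hB : ∀ y₁ ∈ Icc 1 (K + 1), ∀ y₂ ∈ Icc 1 (K + 1), ℓ y₁ y₂ ≤ B)
  (hH : ∀ g ∈ H, Measurable g ∧ ∀ x, g x ∈ Icc 1 (K + 1)) (hLearn : LearnableRisk ℓ 𝒟 H)
include hℓ hB hH hLearn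

theorem fDQ_eq_mixture_of_learnableRisk (hQ : ∀ j, IsOODDistr K (Q j))
    (hconv : ∀ a ∈ simplexO l, ∃ D' ∈ 𝒟, D'.DI = D.DI ∧ D'.prior = ∑ j, a j ∧
      ENNReal.ofReal D'.prior • D'.DO = ∑ j, ENNReal.ofReal (a j) • Q j)
    {a : Fin l → ℝ} (ha : a ∈ simplexO l) :
    fDQ ℓ D H Q a = mixture a (fDQ ℓ D H Q 0) (fun j => fDQ ℓ D H Q (Pi.single j 1)) := by
  obtain ⟨ε, -, hε, A, hA⟩ := hLearn
  have hr₀ : ∀ g : H, riskIn ℓ D g.1 ∈ Icc 0 B := fun g =>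
    riskIn_mem_Icc hℓ hB (hH g.1 g.2).2 D
  have hr : ∀ j, ∀ g : H, riskQ ℓ K (Q j) g.1 ∈ Icc 0 B := fun j g =>
    have := (hQ j).1
    riskQ_mem_Icc hℓ hB (hH g.1 g.2).2
  have hupper : ∀ n ≥ 1, fDQ ℓ D H Q a
      ≤ mixture a (⨅ g : H, riskIn ℓ D g.1) (fun j => ⨅ g : H, riskQ ℓ K (Q j) g.1) + ε n := by
    intro n hn
    have hfacts : ∀ b ∈ simplexO l,
        (Measurable fun S => mixture b (riskIn ℓ D (A n S)) (fun j => riskQ ℓ K (Q j) (A n S))) ∧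
        ∫ S, (mixture b (riskIn ℓ D (A n S)) (fun j => riskQ ℓ K (Q j) (A n S))
          - fDQ ℓ D H Q b) ∂(sampleMeasure D n) ≤ ε n := by
      intro b hb
      obtain ⟨D', hD', hDI, hprior, hDO⟩ := hconv b hb
      rw [← sampleMeasure_congr hDI]
      refine hA.integral_excess_le_of_risk_eq hD' hn
        (fun g => mixture b (riskIn ℓ D g) (fun j => riskQ ℓ K (Q j) g)) fun g hg => ?_
      rw [risk_eq_mixture hℓ hB (hH g hg).2 (hH g hg).1 hQ hb.1 hprior hDO, riskIn_congr ℓ hDI]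
    exact iInf_mixture_le_of_expected_excess_le (μ := sampleMeasure D n)
      (Z := fun S => (⟨A n S, hA.1 n hn S⟩ : H)) hr₀ hr (fun b hb => (hfacts b hb).1)
      (fun b hb => (hfacts b hb).2) ha
  have : Nonempty H := by
    obtain ⟨p⟩ := nonempty_of_isProbabilityMeasure D.DI
    exact ⟨⟨A 1 fun _ => p, hA.1 1 le_rfl _⟩⟩
  rw [fDQ_zero, funext fDQ_single_one]
  refine le_antisymm ?_ (mixture_iInf_le_iInf_mixture ha.1 ha.2.le
    ⟨0, by rintro _ ⟨g, rfl⟩; exact (hr₀ g).1⟩ fun j => ⟨0, by rintro _ ⟨g, rfl⟩; exact (hr j g).1⟩)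
  exact ge_of_tendsto (by simpa using tendsto_const_nhds.add hε) (eventually_atTop.2 ⟨1, hupper⟩)

theorem iInf_riskA_eq_of_learnableRisk_s2 (hPU : PriorUnknown 𝒟) (hD : D ∈ 𝒟) {α : ℝ}
    (hα : α ∈ Ico (0 : ℝ) 1) :
    ⨅ g : H, riskA ℓ D g.1 α
      = (1 - α) * (⨅ g : H, riskIn ℓ D g.1) + α * (⨅ g : H, riskOut ℓ D g.1) := by
  have hconv : ∀ b ∈ simplexO 1, ∃ D' ∈ 𝒟, D'.DI = D.DI ∧ D'.prior = ∑ j, b j ∧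
      ENNReal.ofReal D'.prior • D'.DO = ∑ j : Fin 1, ENNReal.ofReal (b j) • D.DO := fun b hb =>
    ⟨D.withPrior ⟨∑ j, b j, Finset.sum_nonneg fun j _ => hb.1 j, hb.2⟩, hPU D hD _, rfl, rfl,
      by simp [Domain.withPrior]⟩
  have hα1 : (fun _ => α : Fin 1 → ℝ) ∈ simplexO 1 := ⟨fun _ => hα.1, by simpa using hα.2⟩
  have h := fDQ_eq_mixture_of_learnableRisk hℓ hB hH hLearn (fun _ => ⟨D.probO, D.suppO⟩) hconv hα1
  rw [fDQ_zero, funext fDQ_single_one] at h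
  simpa [fDQ, mixture, riskA, riskOut, riskQ] using h

end Learnable

theorem stmt2_general {d K : ℕ} (X : Set (EuclideanSpace ℝ (Fin d)))
    (ℓ : ℕ → ℕ → ℝ)
    (hl_nonneg : ∀ y₁ y₂, 0 ≤ ℓ y₁ y₂)
    (hl_bdd : ∃ B, ∀ y₁ ∈ Set.Icc 1 (K + 1), ∀ y₂ ∈ Set.Icc 1 (K + 1), ℓ y₁ y₂ ≤ B)
    (H : Set (↥X → ℕ)) (hH : ∀ h ∈ H, Measurable h ∧ ∀ x, h x ∈ Set.Icc 1 (K + 1))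
    (𝒟 : Set (Domain ↥X K)) (hPU : PriorUnknown 𝒟)
    (hLearn : LearnableRisk ℓ 𝒟 H) :
    (∀ D ∈ 𝒟, ∀ α ∈ Set.Ico (0 : ℝ) 1,
        (⨅ h : H, riskA ℓ D h.1 α)
          = (1 - α) * (⨅ h : H, riskIn ℓ D h.1) + α * (⨅ h : H, riskOut ℓ D h.1)) ∧
    (∀ (l : ℕ) (Q : Fin l → Measure (↥X × ℕ)), (∀ j, IsOODDistr K (Q j)) →
      ∀ D ∈ 𝒟,
        (∃ lam ∈ simplexO l, D.prior = ∑ j, lam j ∧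
          ENNReal.ofReal D.prior • D.DO = ∑ j, ENNReal.ofReal (lam j) • Q j) →
        (∀ a ∈ simplexO l, ∃ D' ∈ 𝒟, D'.DI = D.DI ∧ D'.prior = ∑ j, a j ∧
          ENNReal.ofReal D'.prior • D'.DO = ∑ j, ENNReal.ofReal (a j) • Q j) →
        ∀ a ∈ simplexO l,
          fDQ ℓ D H Q a
            = (1 - ∑ j, a j) * fDQ ℓ D H Q 0
              + ∑ j, a j * fDQ ℓ D H Q (Pi.single j 1)) := by
  obtain ⟨B, hB⟩ := hl_bdd
  exact ⟨fun D hD α hα => iInf_riskA_eq_of_learnableRisk_s2 hl_nonneg hB hH hLearn hPU hD hα,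
    fun l Q hQ D _ _ hconv a ha =>
      fDQ_eq_mixture_of_learnableRisk hl_nonneg hB hH hLearn hQ hconv ha⟩

/-- Lemmas 1 and 2 of the paper.  If OOD detection is learnable under
risk in a prior-unknown space `𝒟` for `H`, then (i) the linear condition under risk holds,
and (ii) the multi-linear condition holds for every OOD convex domain in `𝒟` corresponding
to an OOD convex decomposition `Q₁,…,Q_l`. -/
theorem stmt2 {d K : ℕ} (X : Set (EuclideanSpace ℝ (Fin d)))
    (ℓ : ℕ → ℕ → ℝ)
    (hl_nonneg : ∀ y₁ y₂, 0 ≤ ℓ y₁ y₂)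
    (hl_zero : ∀ y₁ ∈ Set.Icc 1 (K + 1), ∀ y₂ ∈ Set.Icc 1 (K + 1), (ℓ y₁ y₂ = 0 ↔ y₁ = y₂))
    (hl_bdd : ∃ B, ∀ y₁ ∈ Set.Icc 1 (K + 1), ∀ y₂ ∈ Set.Icc 1 (K + 1), ℓ y₁ y₂ ≤ B)
    (H : Set (↥X → ℕ)) (hH : ∀ h ∈ H, Measurable h ∧ ∀ x, h x ∈ Set.Icc 1 (K + 1))
    (𝒟 : Set (Domain ↥X K)) (hPU : PriorUnknown 𝒟)
    (hLearn : LearnableRisk ℓ 𝒟 H) :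
    (∀ D ∈ 𝒟, ∀ α ∈ Set.Ico (0 : ℝ) 1,
        (⨅ h : H, riskA ℓ D h.1 α)
          = (1 - α) * (⨅ h : H, riskIn ℓ D h.1) + α * (⨅ h : H, riskOut ℓ D h.1)) ∧
    (∀ (l : ℕ) (Q : Fin l → Measure (↥X × ℕ)), (∀ j, IsOODDistr K (Q j)) →
      ∀ D ∈ 𝒟,
        (∃ lam ∈ simplexO l, D.prior = ∑ j, lam j ∧
          ENNReal.ofReal D.prior • D.DO = ∑ j, ENNReal.ofReal (lam j) • Q j) →
        (∀ a ∈ simplexO l, ∃ D' ∈ 𝒟, D'.DI = D.DI ∧ D'.prior = ∑ j, a j ∧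
          ENNReal.ofReal D'.prior • D'.DO = ∑ j, ENNReal.ofReal (a j) • Q j) →
        ∀ a ∈ simplexO l,
          fDQ ℓ D H Q a
            = (1 - ∑ j, a j) * fDQ ℓ D H Q 0
              + ∑ j, a j * fDQ ℓ D H Q (Pi.single j 1)) :=
  stmt2_general X ℓ hl_nonneg hl_bdd H hH 𝒟 hPU hLearn

end OODF
end
end
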